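/- The polynomials i_1 = c+f, i_2 = c^2+2de+f^2, k_1 = -bx+ay, k_2 = -ex^2+(c-f)xy+dy^2, k_3 = -(ea+fb)x+(ca+db)y, i_3 = -ea^2+(c-f)ab+db^2 satisfy the syzygy (i_1 k_1 - k_3)^2 + k_3^2 - i_2 k_1^2 - 2 i_3 k_2 = 0 identically in a,b,c,d,e,f,x,y. -/
import Mathlib


theorem sibirsky_syzygy (a b c d e f x y : ℝ) :
    ((c + f) * (-b * x + a * y) - (-(e * a + f * b) * x + (c * a + d * b) * y)) ^ 2
      + (-(e * a + f * b) * x + (c * a + d * b) * y) ^ 2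
      - (c ^ 2 + 2 * d * e + f ^ 2) * (-b * x + a * y) ^ 2
      - 2 * (-e * a ^ 2 + (c - f) * a * b + d * b ^ 2)
          * (-e * x ^ 2 + (c - f) * x * y + d * y ^ 2) = 0 := by
  ring
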